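/- arXiv:2211.07778 — 5 statements merged into one kernel-verified Lean document; each statement's English description precedes it below -/
import Mathlib

section
/- For every n ≥ 1 and every positive integer N, the reduction-modulo-N homomorphism from Sp_{2n}(ℤ) to Sp_{2n}(ℤ/Nℤ) is surjective. -/
/-!
Over a local ring every symplectic matrix is a product of symplectic transvections
`x ↦ x + c ω(x, v) v`. Column by column, the images of a hyperbolic pair of basis vectors are
moved back into place by transvections fixing the pairs already in place: a transvection moves
`u` to `v` while fixing everything `ω`-orthogonal to `v - u` as soon as `ω(u, v)` is a unit, and
locality provides an intermediate vector with unit pairings otherwise. Generation by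
transvections passes to finite products of rings, hence, by the Chinese remainder theorem, to
every `ZMod N` with `N ≠ 0`. Transvections over `ZMod N` lift to transvections over `ℤ`, which
are symplectic, so every element of `Sp_{2n}(ZMod N)` lifts.
-/

open Matrix

/-- The standard symplectic form matrix `Ω = ((0, 1ₙ), (−1ₙ, 0))`, over any commutative
ring `R`, with rows and columns indexed by `Fin n ⊕ Fin n`. -/
def SpJ (R : Type*) [CommRing R] (n : ℕ) :
    Matrix (Fin n ⊕ Fin n) (Fin n ⊕ Fin n) R :=
  fromBlocks 0 1 (-1) 0

lemma IsLocalRing.isUnit_add_of_not_isUnit {R : Type*} [CommRing R] [IsLocalRing R] {a b : R}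
    (ha : IsUnit a) (hb : ¬IsUnit b) : IsUnit (a + b) := by
  by_contra h
  refine (isUnit_or_isUnit_of_isUnit_add (a := a + b) (b := -b) (by simpa)).elim h ?_
  simpa using hb

lemma ZMod.isLocalRing_prime_pow {p k : ℕ} (hp : p.Prime) (hk : 0 < k) :
    IsLocalRing (ZMod (p ^ k)) := by
  have : Fact (1 < p ^ k) := ⟨Nat.one_lt_pow hk.ne' hp.one_lt⟩
  refine .of_isUnit_or_isUnit_one_sub_self fun a => or_iff_not_imp_left.2 fun ha => ?_
  rw [← natCast_zmod_val a, isUnit_natCast_iff_not_dvd_pow hp hk, not_not] at ha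
  refine IsNilpotent.isUnit_one_sub ⟨k, ?_⟩
  rw [← natCast_zmod_val a, ← Nat.cast_pow, natCast_eq_zero_iff]
  exact pow_dvd_pow_of_dvd ha k

namespace SymplecticGroup

variable {l R S : Type*} [Fintype l] [DecidableEq l] [CommRing R] [CommRing S]

def form (x y : l ⊕ l → R) : R := x ⬝ᵥ J l R *ᵥ y

@[simp] lemma form_add_left (x y z : l ⊕ l → R) : form (x + y) z = form x z + form y z :=
  add_dotProduct _ _ _

@[simp] lemma form_add_right (x y z : l ⊕ l → R) : form x (y + z) = form x y + form x z := by
  simp [form, mulVec_add]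

@[simp] lemma form_sub_right (x y z : l ⊕ l → R) : form x (y - z) = form x y - form x z := by
  simp [form, mulVec_sub]

@[simp] lemma form_smul_left (c : R) (x y : l ⊕ l → R) : form (c • x) y = c * form x y :=
  smul_dotProduct _ _ _

@[simp] lemma form_smul_right (c : R) (x y : l ⊕ l → R) : form x (c • y) = c * form x y := by
  simp [form, mulVec_smul]

@[simp] lemma form_self (x : l ⊕ l → R) : form x x = 0 := by
  simp [form, J, dotProduct, mulVec, fromBlocks, Fintype.sum_sum_type, one_apply, mul_comm]

lemma form_comm (x y : l ⊕ l → R) : form x y = -form y x := by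
  simp [form, dotProduct_mulVec, ← mulVec_transpose, dotProduct_comm y, neg_mulVec]

@[simp] lemma form_single_single (a b : l ⊕ l) :
    form (Pi.single a 1) (Pi.single b 1) = J l R a b := by
  simp [form]

lemma form_mulVec_mulVec (g : Matrix (l ⊕ l) (l ⊕ l) R) (x y : l ⊕ l → R) :
    form (g *ᵥ x) (g *ᵥ y) = x ⬝ᵥ (gᵀ * J l R * g) *ᵥ y := by
  rw [form, dotProduct_comm, dotProduct_mulVec, ← mulVec_transpose, dotProduct_comm,
    mulVec_mulVec, mulVec_mulVec]

lemma mem_iff_form {g : Matrix (l ⊕ l) (l ⊕ l) R} :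
    g ∈ symplecticGroup l R ↔ ∀ x y, form (g *ᵥ x) (g *ᵥ y) = form x y := by
  rw [mem_iff', ext_iff_mulVec, forall_comm]
  refine forall_congr' fun y => ?_
  rw [← dotProduct_eq_iff]
  refine forall_congr' fun x => ?_
  rw [form_mulVec_mulVec, form, dotProduct_comm x, dotProduct_comm x]

lemma form_mulVec_mulVec_of_mem {g : Matrix (l ⊕ l) (l ⊕ l) R}
    (hg : g ∈ symplecticGroup l R) (x y : l ⊕ l → R) :
    form (g *ᵥ x) (g *ᵥ y) = form x y :=
  mem_iff_form.1 hg x y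

lemma form_mulVec_of_mulVec_eq {g : Matrix (l ⊕ l) (l ⊕ l) R} (hg : g ∈ symplecticGroup l R)
    {s : l ⊕ l → R} (hs : g *ᵥ s = s) (x : l ⊕ l → R) : form s (g *ᵥ x) = form s x := by
  conv_lhs => rw [← hs]
  exact form_mulVec_mulVec_of_mem hg s x

def transvection (v : l ⊕ l → R) (c : R) : Matrix (l ⊕ l) (l ⊕ l) R :=
  1 + c • vecMulVec v (J l R *ᵥ v)

lemma transvection_mulVec (v : l ⊕ l → R) (c : R) (x : l ⊕ l → R) :
    transvection v c *ᵥ x = x + (c * form x v) • v := by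
  simp [transvection, add_mulVec, smul_mulVec, vecMulVec_mulVec, form, dotProduct_comm x,
    mul_smul]

lemma transvection_mem (v : l ⊕ l → R) (c : R) : transvection v c ∈ symplecticGroup l R := by
  refine mem_iff_form.2 fun x y => ?_
  simp only [transvection_mulVec, form_add_left, form_add_right, form_smul_left,
    form_smul_right, form_self, form_comm v y]
  ring

lemma transvection_neg_mul (v : l ⊕ l → R) (c : R) :
    transvection v (-c) * transvection v c = 1 := by
  refine ext_iff_mulVec.2 fun x => ?_
  simp [← mulVec_mulVec, transvection_mulVec]

lemma mapMatrix_transvection (f : R →+* S) (v : l ⊕ l → R) (c : R) :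
    f.mapMatrix (transvection v c) = transvection (f ∘ v) (f c) := by
  ext a b
  simp [transvection, one_apply, apply_ite f, vecMulVec_apply, RingHom.map_mulVec, map_J]

variable (l R) in
def transvections : Set (Matrix (l ⊕ l) (l ⊕ l) R) :=
  Set.range fun p : (l ⊕ l → R) × R => transvection p.1 p.2

lemma one_mem_transvections : 1 ∈ transvections l R :=
  ⟨(0, 0), by simp [transvection]⟩

lemma closure_transvections_le :
    Submonoid.closure (transvections l R) ≤ symplecticGroup l R :=
  Submonoid.closure_le.2 <| Set.range_subset_iff.2 fun p => transvection_mem p.1 p.2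

lemma mem_closure_transvections_of_mul_mem {t g : Matrix (l ⊕ l) (l ⊕ l) R}
    (ht : t ∈ Submonoid.closure (transvections l R))
    (htg : t * g ∈ Submonoid.closure (transvections l R)) :
    g ∈ Submonoid.closure (transvections l R) := by
  induction ht using Submonoid.closure_induction generalizing g with
  | mem t ht =>
    obtain ⟨⟨v, c⟩, rfl⟩ := ht
    rw [← Matrix.one_mul g, ← transvection_neg_mul v c, Matrix.mul_assoc]
    exact mul_mem (Submonoid.subset_closure ⟨(v, -c), rfl⟩) htg
  | one => simpa using htg
  | mul t₁ t₂ _ _ ih₁ ih₂ => exact ih₂ (ih₁ (by rwa [← Matrix.mul_assoc]))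

lemma closure_transvections_le_map {f : R →+* S} (hf : Function.Surjective f) :
    Submonoid.closure (transvections l S) ≤
      (Submonoid.closure (transvections l R)).map f.mapMatrix := by
  rw [MonoidHom.map_mclosure]
  refine Submonoid.closure_mono ?_
  rintro _ ⟨⟨v, c⟩, rfl⟩
  obtain ⟨c', rfl⟩ := hf c
  refine ⟨transvection (Function.surjInv hf ∘ v) c', ⟨(_, _), rfl⟩, ?_⟩
  rw [mapMatrix_transvection, ← Function.comp_assoc, Function.comp_surjInv]
  rfl

section Moving

variable {X : Set (l ⊕ l → R)} {u v : l ⊕ l → R}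

lemma exists_mem_closure_mulVec_eq (huv : IsUnit (form u v))
    (hX : ∀ s ∈ X, form s u = form s v) :
    ∃ t ∈ Submonoid.closure (transvections l R),
      t *ᵥ u = v ∧ ∀ s ∈ X, t *ᵥ s = s := by
  refine ⟨transvection (v - u) ↑huv.unit⁻¹, Submonoid.subset_closure ⟨(_, _), rfl⟩, ?_,
    fun s hs => ?_⟩
  · simp [transvection_mulVec]
  · simp [transvection_mulVec, hX s hs]

lemma exists_mem_closure_mulVec_eq_of_isUnit_of_isUnit (w : l ⊕ l → R)
    (huw : IsUnit (form u w)) (hwv : IsUnit (form w v))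
    (hXuw : ∀ s ∈ X, form s u = form s w) (hXwv : ∀ s ∈ X, form s w = form s v) :
    ∃ t ∈ Submonoid.closure (transvections l R),
      t *ᵥ u = v ∧ ∀ s ∈ X, t *ᵥ s = s := by
  obtain ⟨t₁, ht₁, hut₁, hXt₁⟩ := exists_mem_closure_mulVec_eq huw hXuw
  obtain ⟨t₂, ht₂, hwt₂, hXt₂⟩ := exists_mem_closure_mulVec_eq hwv hXwv
  refine ⟨t₂ * t₁, mul_mem ht₂ ht₁, ?_, fun s hs => ?_⟩
  · rw [← mulVec_mulVec, hut₁, hwt₂]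
  · rw [← mulVec_mulVec, hXt₁ s hs, hXt₂ s hs]

end Moving

section IsLocalRing

variable [IsLocalRing R] {X : Set (l ⊕ l → R)} {e f : l ⊕ l → R}

lemma exists_mem_closure_mulVec_eq_left (hef : form e f = 1)
    (hX : ∀ s ∈ X, form s e = 0 ∧ form s f = 0) {u p : l ⊕ l → R} (hup : form u p = 1)
    (hXup : ∀ s ∈ X, form s u = 0 ∧ form s p = 0) :
    ∃ t ∈ Submonoid.closure (transvections l R),
      t *ᵥ u = e ∧ ∀ s ∈ X, t *ᵥ s = s := by
  have hfe : form f e = -1 := by rw [form_comm, hef]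
  by_cases hpe : IsUnit (form p e)
  · refine exists_mem_closure_mulVec_eq_of_isUnit_of_isUnit p (by simp [hup]) hpe
      (fun s hs => ?_) (fun s hs => ?_) <;> simp [hX s hs, hXup s hs]
  by_cases huf : IsUnit (form u f)
  · refine exists_mem_closure_mulVec_eq_of_isUnit_of_isUnit f huf (by simp [hfe])
      (fun s hs => ?_) (fun s hs => ?_) <;> simp [hX s hs, hXup s hs]
  refine exists_mem_closure_mulVec_eq_of_isUnit_of_isUnit (p + f) ?_ ?_
    (fun s hs => ?_) (fun s hs => ?_)
  · rw [form_add_right, hup]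
    exact IsLocalRing.isUnit_add_of_not_isUnit isUnit_one huf
  · rw [form_add_left, hfe, add_comm]
    exact IsLocalRing.isUnit_add_of_not_isUnit isUnit_one.neg hpe
  all_goals simp [hX s hs, hXup s hs]

lemma exists_mem_closure_mulVec_eq_right (hef : form e f = 1)
    (hX : ∀ s ∈ X, form s e = 0 ∧ form s f = 0) {u : l ⊕ l → R} (heu : form e u = 1)
    (hXu : ∀ s ∈ X, form s u = 0) :
    ∃ t ∈ Submonoid.closure (transvections l R),
      t *ᵥ u = f ∧ ∀ s ∈ insert e X, t *ᵥ s = s := by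
  have hXuf : ∀ s ∈ insert e X, form s u = form s f := by
    rintro s (rfl | hs)
    · rw [heu, hef]
    · rw [hXu s hs, (hX s hs).2]
  by_cases huf : IsUnit (form u f)
  · exact exists_mem_closure_mulVec_eq huf hXuf
  refine exists_mem_closure_mulVec_eq_of_isUnit_of_isUnit (e + f) ?_ (by simp [hef])
    (fun s hs => ?_) (fun s hs => ?_)
  · rw [form_add_right, form_comm u e, heu]
    exact IsLocalRing.isUnit_add_of_not_isUnit isUnit_one.neg huf
  all_goals
    rcases hs with rfl | hs
    · simp [hef, heu]
    · simp [hX s hs, hXu s hs]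

lemma exists_mem_closure_mul_mulVec_eq (hef : form e f = 1)
    (hX : ∀ s ∈ X, form s e = 0 ∧ form s f = 0) {g : Matrix (l ⊕ l) (l ⊕ l) R}
    (hg : g ∈ symplecticGroup l R) (hgX : ∀ s ∈ X, g *ᵥ s = s) :
    ∃ t ∈ Submonoid.closure (transvections l R),
      (t * g) *ᵥ e = e ∧ (t * g) *ᵥ f = f ∧ ∀ s ∈ X, (t * g) *ᵥ s = s := by
  obtain ⟨t₁, ht₁, hge, hXt₁⟩ := exists_mem_closure_mulVec_eq_left hef hX
    (by rw [form_mulVec_mulVec_of_mem hg, hef]) fun s hs => by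
      simpa only [form_mulVec_of_mulVec_eq hg (hgX s hs)] using hX s hs
  set g₁ := t₁ * g
  have hg₁ : g₁ ∈ symplecticGroup l R := mul_mem (closure_transvections_le ht₁) hg
  have hg₁X : ∀ s ∈ X, g₁ *ᵥ s = s := fun s hs => by
    rw [← mulVec_mulVec, hgX s hs, hXt₁ s hs]
  have hg₁e : g₁ *ᵥ e = e := by rw [← mulVec_mulVec, hge]
  obtain ⟨t₂, ht₂, hgf, hXt₂⟩ :=
    exists_mem_closure_mulVec_eq_right (u := g₁ *ᵥ f) hef hX
      (by rw [form_mulVec_of_mulVec_eq hg₁ hg₁e, hef]) fun s hs => by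
        rw [form_mulVec_of_mulVec_eq hg₁ (hg₁X s hs), (hX s hs).2]
  refine ⟨t₂ * t₁, mul_mem ht₂ ht₁, ?_, ?_, fun s hs => ?_⟩
  · rw [Matrix.mul_assoc, ← mulVec_mulVec, hg₁e, hXt₂ e (Set.mem_insert e X)]
  · rw [Matrix.mul_assoc, ← mulVec_mulVec, hgf]
  · rw [Matrix.mul_assoc, ← mulVec_mulVec, hg₁X s hs, hXt₂ s (Set.mem_insert_of_mem e hs)]

theorem le_closure_transvections_of_isLocalRing :
    symplecticGroup l R ≤ Submonoid.closure (transvections l R) := by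
  suffices ∀ I : Finset l, ∀ g ∈ symplecticGroup l R,
      (∀ a ∉ I.disjSum I, g *ᵥ Pi.single a 1 = Pi.single a 1) →
        g ∈ Submonoid.closure (transvections l R) from
    fun g hg => this Finset.univ g hg (by simp)
  intro I
  induction I using Finset.induction_on with
  | empty =>
    intro g _ hfix
    suffices g = 1 from this ▸ one_mem _
    ext a b
    simpa [mulVec_single_one, Pi.single_apply, one_apply] using congrFun (hfix b (by simp)) a
  | insert j I _ ih =>
    intro g hg hfix
    set X := (fun a => (Pi.single a 1 : l ⊕ l → R)) ''
      {a | a ∉ (insert j I).disjSum (insert j I)}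
    have hX : ∀ s ∈ X,
        form s (Pi.single (.inr j) 1) = 0 ∧ form s (Pi.single (.inl j) 1) = 0 := by
      rintro _ ⟨a, ha, rfl⟩
      cases a <;> simp_all [J, eq_comm]
    obtain ⟨t, ht, he, hf, htX⟩ := exists_mem_closure_mul_mulVec_eq (by simp [J]) hX hg
      (by rintro _ ⟨a, ha, rfl⟩; exact hfix a (by simp_all))
    refine mem_closure_transvections_of_mul_mem ht
      (ih _ (mul_mem (closure_transvections_le ht) hg) fun a ha => ?_)
    by_cases haj : a ∈ (insert j I).disjSum (insert j I)
    · rcases a with i | i <;> obtain rfl : i = j := by simp_all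
      exacts [hf, he]
    · exact htX _ ⟨a, haj, rfl⟩

end IsLocalRing

lemma le_closure_transvections_of_ringEquiv (e : R ≃+* S)
    (h : symplecticGroup l S ≤ Submonoid.closure (transvections l S)) :
    symplecticGroup l R ≤ Submonoid.closure (transvections l R) := by
  intro g hg
  obtain ⟨g', hg', hgg'⟩ := closure_transvections_le_map (f := (e : R →+* S)) e.surjective
    (h (map_mem hg e))
  rwa [← map_injective e.injective hgg']

lemma le_closure_transvections_prod {A B : Type*} [CommRing A] [CommRing B]
    (hA : symplecticGroup l A ≤ Submonoid.closure (transvections l A))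
    (hB : symplecticGroup l B ≤ Submonoid.closure (transvections l B)) :
    symplecticGroup l (A × B) ≤ Submonoid.closure (transvections l (A × B)) := by
  let φ : Matrix (l ⊕ l) (l ⊕ l) (A × B) →*
      Matrix (l ⊕ l) (l ⊕ l) A × Matrix (l ⊕ l) (l ⊕ l) B :=
    .prod (RingHom.fst A B).mapMatrix.toMonoidHom (RingHom.snd A B).mapMatrix.toMonoidHom
  have hφ : Function.Injective φ := fun g h hgh => by
    ext i j
    exacts [congrFun₂ congr($hgh.1) i j, congrFun₂ congr($hgh.2) i j]
  have hT : transvections l A ×ˢ transvections l B ⊆ φ '' transvections l (A × B) := by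
    rintro ⟨_, _⟩ ⟨⟨⟨v, c⟩, rfl⟩, ⟨⟨w, d⟩, rfl⟩⟩
    exact ⟨transvection (fun i => (v i, w i)) (c, d), ⟨(_, _), rfl⟩,
      Prod.ext (mapMatrix_transvection _ _ _) (mapMatrix_transvection _ _ _)⟩
  intro g hg
  obtain ⟨g', hg', hφg'⟩ : φ g ∈ (Submonoid.closure (transvections l (A × B))).map φ := by
    rw [MonoidHom.map_mclosure]
    refine Submonoid.closure_mono hT ?_
    rw [Submonoid.closure_prod one_mem_transvections one_mem_transvections]
    exact ⟨hA (map_mem hg _), hB (map_mem hg _)⟩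
  rwa [← hφ hφg']

theorem le_closure_transvections_zmod {N : ℕ} (hN : N ≠ 0) :
    symplecticGroup l (ZMod N) ≤ Submonoid.closure (transvections l (ZMod N)) := by
  induction N using Nat.recOnPosPrimePosCoprime with
  | prime_pow p k hp hk =>
    have := ZMod.isLocalRing_prime_pow hp hk
    exact le_closure_transvections_of_isLocalRing
  | zero => exact absurd rfl hN
  | one => exact fun g _ => Subsingleton.elim g 1 ▸ one_mem _
  | coprime a b ha hb hab iha ihb =>
    exact le_closure_transvections_of_ringEquiv (ZMod.chineseRemainder hab)
      (le_closure_transvections_prod (iha (by omega)) (ihb (by omega)))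

end SymplecticGroup

lemma SpJ_eq_neg_J (R : Type*) [CommRing R] (n : ℕ) : SpJ R n = -J (Fin n) R := by
  simp [SpJ, J, fromBlocks_neg]

lemma mem_symplecticGroup_iff_SpJ {R : Type*} [CommRing R] {n : ℕ}
    {g : Matrix (Fin n ⊕ Fin n) (Fin n ⊕ Fin n) R} :
    g ∈ symplecticGroup (Fin n) R ↔ gᵀ * SpJ R n * g = SpJ R n := by
  simp [SymplecticGroup.mem_iff', SpJ_eq_neg_J]

theorem sp_reduction_mod_N_surjective_general (n N : ℕ) (hN : 0 < N)
    (g : Matrix (Fin n ⊕ Fin n) (Fin n ⊕ Fin n) (ZMod N))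
    (hg : gᵀ * SpJ (ZMod N) n * g = SpJ (ZMod N) n) :
    ∃ G : Matrix (Fin n ⊕ Fin n) (Fin n ⊕ Fin n) ℤ,
      Gᵀ * SpJ ℤ n * G = SpJ ℤ n ∧ G.map (Int.cast : ℤ → ZMod N) = g := by
  have hgSp : g ∈ symplecticGroup (Fin n) (ZMod N) := mem_symplecticGroup_iff_SpJ.2 hg
  obtain ⟨G, hG, hGg⟩ :=
    SymplecticGroup.closure_transvections_le_map (f := Int.castRingHom _)
      ZMod.intCast_surjective (SymplecticGroup.le_closure_transvections_zmod hN.ne' hgSp)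
  exact ⟨G, mem_symplecticGroup_iff_SpJ.1 (SymplecticGroup.closure_transvections_le hG), hGg⟩

/-- For every `n ≥ 1` and every positive integer `N`, the reduction-modulo-`N`
homomorphism from `Sp_{2n}(ℤ)` to `Sp_{2n}(ℤ/Nℤ)` is surjective. -/
theorem sp_reduction_mod_N_surjective (n N : ℕ) (hn : 1 ≤ n) (hN : 0 < N)
    (g : Matrix (Fin n ⊕ Fin n) (Fin n ⊕ Fin n) (ZMod N))
    (hg : gᵀ * SpJ (ZMod N) n * g = SpJ (ZMod N) n) :
    ∃ G : Matrix (Fin n ⊕ Fin n) (Fin n ⊕ Fin n) ℤ,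
      Gᵀ * SpJ ℤ n * G = SpJ ℤ n ∧ G.map (Int.cast : ℤ → ZMod N) = g :=
  sp_reduction_mod_N_surjective_general n N hN g hg
end

section
/- Let p be a prime, l ≥ 0, n ≥ 1, and let D ∈ Mat_n(ℤ) be such that there exist U₀, V₀ ∈ GL_n(ℤ) with U₀·D·V₀ = diag(d₁, …, d_n), where d₁, …, d_n are positive integers with d₁ | d₂ | … | d_n and each d_i divides p^l. Define B(D) := {B ∈ Mat_n(ℤ) : Bᵀ·D = Dᵀ·B}, with the equivalence relation B ∼ B′ iff the rational matrix (B − B′)·D^{-1} is symmetric with integer entries. Then: (1) for all U, V ∈ GL_n(ℤ), the number of equivalence classes of B(D) modulo D equals the number of equivalence classes of B(U·D·V) modulo U·D·V; (2) the number of equivalence classes of B(D) modulo D equals d₁^n · d₂^{n−1} ⋯ d_n. -/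
open Matrix

/-- `B(D)`: the set of integer matrices `B` with `BᵀD = DᵀB`. -/
def BDset (n : ℕ) (D : Matrix (Fin n) (Fin n) ℤ) : Type :=
  {B : Matrix (Fin n) (Fin n) ℤ // Bᵀ * D = Dᵀ * B}

/-- The congruence relation `B ≡ B′ (mod D)`: the rational matrix `(B − B′)·D⁻¹` is
symmetric with integer entries. -/
def BDrel (n : ℕ) (D : Matrix (Fin n) (Fin n) ℤ) (B B' : BDset n D) : Prop :=
  ∃ S : Matrix (Fin n) (Fin n) ℤ, Sᵀ = S ∧
    S.map (Int.cast : ℤ → ℚ) =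
      ((B.1 - B'.1).map (Int.cast : ℤ → ℚ)) * (D.map (Int.cast : ℤ → ℚ))⁻¹

section Aux

variable {n : ℕ}

lemma aux_mem (u ui v D B : Matrix (Fin n) (Fin n) ℤ) (hui : ui * u = 1)
    (hB : Bᵀ * D = Dᵀ * B) :
    (uiᵀ * B * v)ᵀ * (u * D * v) = (u * D * v)ᵀ * (uiᵀ * B * v) := by
  calc (uiᵀ * B * v)ᵀ * (u * D * v)
      = vᵀ * (Bᵀ * (ui * (u * (D * v)))) := by
        simp only [transpose_mul, transpose_transpose, Matrix.mul_assoc]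
    _ = vᵀ * (Bᵀ * (D * v)) := by
        rw [← Matrix.mul_assoc ui u, hui, Matrix.one_mul]
    _ = vᵀ * (Dᵀ * (B * v)) := by
        rw [← Matrix.mul_assoc Bᵀ D v, hB, Matrix.mul_assoc]
    _ = vᵀ * (Dᵀ * (uᵀ * (uiᵀ * (B * v)))) := by
        rw [← Matrix.mul_assoc uᵀ uiᵀ, ← transpose_mul, hui, transpose_one, Matrix.one_mul]
    _ = (u * D * v)ᵀ * (uiᵀ * B * v) := by
        simp only [transpose_mul, transpose_transpose, Matrix.mul_assoc]

lemma aux_rel (u ui v vi D C S : Matrix (Fin n) (Fin n) ℚ)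
    (hu : u * ui = 1) (hv : v * vi = 1) (hS : S = C * D⁻¹) :
    uiᵀ * S * ui = (uiᵀ * C * v) * (u * D * v)⁻¹ := by
  have h1 : (u * D * v)⁻¹ = vi * (D⁻¹ * ui) := by
    rw [Matrix.mul_inv_rev (u * D) v, Matrix.mul_inv_rev u D,
      inv_eq_right_inv hu, inv_eq_right_inv hv]
  rw [h1, hS]
  simp only [Matrix.mul_assoc]
  rw [← Matrix.mul_assoc v vi, hv, Matrix.one_mul]

lemma qmul (A B : Matrix (Fin n) (Fin n) ℤ) :
    (A * B).map (Int.cast : ℤ → ℚ) = A.map Int.cast * B.map Int.cast :=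
  Matrix.map_mul (f := Int.castRingHom ℚ)

lemma qsub (A B : Matrix (Fin n) (Fin n) ℤ) :
    (A - B).map (Int.cast : ℤ → ℚ) = A.map Int.cast - B.map Int.cast := by
  ext i j; simp

lemma qone : ((1 : Matrix (Fin n) (Fin n) ℤ)).map (Int.cast : ℤ → ℚ) = 1 := by
  ext i j; by_cases h : i = j <;> simp [Matrix.one_apply, h]

lemma qtrans (A : Matrix (Fin n) (Fin n) ℤ) :
    (Aᵀ).map (Int.cast : ℤ → ℚ) = (A.map Int.cast)ᵀ := rfl

section transfer

variable (D : Matrix (Fin n) (Fin n) ℤ) (U V : (Matrix (Fin n) (Fin n) ℤ)ˣ)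

/-- rel-preservation, general form. -/
lemma rel_pres (u ui v vi D : Matrix (Fin n) (Fin n) ℤ)
    (hu : u * ui = 1) (hv : v * vi = 1)
    (B B' S : Matrix (Fin n) (Fin n) ℤ) (hSsym : Sᵀ = S)
    (hS : S.map (Int.cast : ℤ → ℚ) =
      ((B - B').map (Int.cast : ℤ → ℚ)) * (D.map (Int.cast : ℤ → ℚ))⁻¹) :
    ((uiᵀ * S * ui)ᵀ = uiᵀ * S * ui) ∧
    (uiᵀ * S * ui).map (Int.cast : ℤ → ℚ) =
      (((uiᵀ * B * v) - (uiᵀ * B' * v)).map (Int.cast : ℤ → ℚ)) *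
        (((u * D * v)).map (Int.cast : ℤ → ℚ))⁻¹ := by
  constructor
  · simp only [transpose_mul, transpose_transpose, hSsym, Matrix.mul_assoc]
  · have hC : (uiᵀ * B * v) - (uiᵀ * B' * v) = uiᵀ * (B - B') * v := by noncomm_ring
    rw [hC]
    have huQ : (u.map (Int.cast : ℤ → ℚ)) * (ui.map Int.cast) = 1 := by
      rw [← qmul, hu, qone]
    have hvQ : (v.map (Int.cast : ℤ → ℚ)) * (vi.map Int.cast) = 1 := by
      rw [← qmul, hv, qone]
    have := aux_rel (u.map (Int.cast : ℤ → ℚ)) (ui.map Int.cast) (v.map Int.cast)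
      (vi.map Int.cast) (D.map Int.cast) ((B - B').map Int.cast) (S.map Int.cast)
      huQ hvQ hS
    simp only [qmul, qtrans]
    exact this

lemma transfer : Nat.card (Quot (BDrel n D)) =
    Nat.card (Quot (BDrel n ((U : Matrix (Fin n) (Fin n) ℤ) * D * (V : Matrix (Fin n) (Fin n) ℤ)))) := by
  set u : Matrix (Fin n) (Fin n) ℤ := (U : Matrix (Fin n) (Fin n) ℤ) with hu_def
  set ui : Matrix (Fin n) (Fin n) ℤ := ((U⁻¹ : _ˣ) : Matrix (Fin n) (Fin n) ℤ) with hui_def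
  set v : Matrix (Fin n) (Fin n) ℤ := (V : Matrix (Fin n) (Fin n) ℤ) with hv_def
  set vi : Matrix (Fin n) (Fin n) ℤ := ((V⁻¹ : _ˣ) : Matrix (Fin n) (Fin n) ℤ) with hvi_def
  have huui : u * ui = 1 := U.mul_inv
  have huiu : ui * u = 1 := U.inv_mul
  have hvvi : v * vi = 1 := V.mul_inv
  have hviv : vi * v = 1 := V.inv_mul
  have hidx : ui * (u * D * v) * vi = D := by
    calc ui * (u * D * v) * vi = (ui * u) * D * (v * vi) := by
          simp only [Matrix.mul_assoc]
      _ = D := by rw [huiu, hvvi, Matrix.one_mul, Matrix.mul_one]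
  -- forward map
  set D' := u * D * v with hD'_def
  let f : BDset n D → BDset n D' := fun B => ⟨uiᵀ * B.1 * v, aux_mem u ui v D B.1 huiu B.2⟩
  let g : BDset n D' → BDset n D := fun B =>
    ⟨uᵀ * B.1 * vi, by
      have := aux_mem ui u vi D' B.1 huui B.2
      rwa [hidx] at this⟩
  have hf : ∀ B B', BDrel n D B B' → BDrel n D' (f B) (f B') := by
    rintro B B' ⟨S, hSsym, hS⟩
    exact ⟨uiᵀ * S * ui, (rel_pres u ui v vi D huui hvvi B.1 B'.1 S hSsym hS).1,
      (rel_pres u ui v vi D huui hvvi B.1 B'.1 S hSsym hS).2⟩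
  have hg : ∀ B B', BDrel n D' B B' → BDrel n D (g B) (g B') := by
    rintro B B' ⟨S, hSsym, hS⟩
    have h := rel_pres ui u vi v D' huiu hviv B.1 B'.1 S hSsym hS
    rw [hidx] at h
    exact ⟨uᵀ * S * u, h.1, h.2⟩
  have hgf : ∀ B : BDset n D, g (f B) = B := by
    intro B
    apply Subtype.ext
    show uᵀ * (uiᵀ * B.1 * v) * vi = B.1
    calc uᵀ * (uiᵀ * B.1 * v) * vi = (uᵀ * uiᵀ) * B.1 * (v * vi) := by
          simp only [Matrix.mul_assoc]
      _ = B.1 := by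
          rw [← transpose_mul, huiu, transpose_one, hvvi, Matrix.one_mul, Matrix.mul_one]
  have hfg : ∀ B : BDset n D', f (g B) = B := by
    intro B
    apply Subtype.ext
    show uiᵀ * (uᵀ * B.1 * vi) * v = B.1
    calc uiᵀ * (uᵀ * B.1 * vi) * v = (uiᵀ * uᵀ) * B.1 * (vi * v) := by
          simp only [Matrix.mul_assoc]
      _ = B.1 := by
          rw [← transpose_mul, huui, transpose_one, hviv, Matrix.one_mul, Matrix.mul_one]
  refine Nat.card_eq_of_bijective (Quot.map f hf) ?_
  refine Function.bijective_iff_has_inverse.mpr ⟨Quot.map g hg, ?_, ?_⟩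
  · intro x; induction x using Quot.ind with
    | _ B => exact congrArg (Quot.mk _) (hgf B)
  · intro x; induction x using Quot.ind with
    | _ B => exact congrArg (Quot.mk _) (hfg B)

end transfer


section diag
variable (d : Fin n → ℕ) (hdpos : ∀ i, 0 < d i)

lemma mem_diag_iff (B : Matrix (Fin n) (Fin n) ℤ) :
    Bᵀ * (Matrix.diagonal fun i => (d i : ℤ)) = (Matrix.diagonal fun i => (d i : ℤ))ᵀ * B ↔
      ∀ i j, B j i * (d j : ℤ) = (d i : ℤ) * B i j := by
  rw [diagonal_transpose, ← Matrix.ext_iff]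
  simp only [mul_diagonal, diagonal_mul, transpose_apply]

include hdpos in
lemma rel_diag_iff (B B' : BDset n (Matrix.diagonal fun i => (d i : ℤ))) :
    BDrel n (Matrix.diagonal fun i => (d i : ℤ)) B B' ↔
      ∀ i j, (d j : ℤ) ∣ (B.1 - B'.1) i j := by
  have hd0 : ∀ i, ((d i : ℚ)) ≠ 0 := fun i => by exact_mod_cast (hdpos i).ne'
  have hqdiag : ((Matrix.diagonal fun i => (d i : ℤ)).map (Int.cast : ℤ → ℚ)) =
      Matrix.diagonal fun i => (d i : ℚ) := by
    ext i j
    by_cases h : i = j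
    · subst h; simp
    · simp [Matrix.map_apply, Matrix.diagonal_apply_ne _ h]
  have hinv : (Matrix.diagonal fun i => (d i : ℚ))⁻¹ =
      Matrix.diagonal fun i => ((d i : ℚ))⁻¹ := by
    apply inv_eq_right_inv
    rw [diagonal_mul_diagonal]
    ext i j
    by_cases h : i = j
    · subst h; simp [Matrix.one_apply, mul_inv_cancel₀ (hd0 i)]
    · simp [Matrix.diagonal_apply_ne _ h, Matrix.one_apply_ne h]
  set C := B.1 - B'.1 with hC
  have hCrel : ∀ i j, C j i * (d j : ℤ) = (d i : ℤ) * C i j := by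
    have h1 := (mem_diag_iff d B.1).mp B.2
    have h2 := (mem_diag_iff d B'.1).mp B'.2
    intro i j
    simp only [hC, Matrix.sub_apply, sub_mul, mul_sub, h1 i j, h2 i j]
  constructor
  · rintro ⟨S, _, hS⟩ i j
    rw [hqdiag, hinv] at hS
    have := congrFun (congrFun hS i) j
    simp only [Matrix.map_apply, Matrix.mul_diagonal] at this
    have hcast : ((S i j : ℤ) : ℚ) * ((d j : ℕ) : ℚ) = (((B.1 - B'.1) i j : ℤ) : ℚ) := by
      rw [this, mul_assoc, inv_mul_cancel₀ (hd0 j), mul_one]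
    have hz : S i j * (d j : ℤ) = (B.1 - B'.1) i j := by exact_mod_cast hcast
    exact ⟨S i j, by rw [hC, ← hz]; ring⟩
  · intro h
    refine ⟨Matrix.of fun i j => C i j / (d j : ℤ), ?_, ?_⟩
    · ext i j
      obtain ⟨m, hm⟩ := h j i
      have hdj0 : (d j : ℤ) ≠ 0 := by exact_mod_cast (hdpos j).ne'
      have hdi0 : (d i : ℤ) ≠ 0 := by exact_mod_cast (hdpos i).ne'
      have hij : C i j = m * (d j : ℤ) := by
        have h0 := hCrel i j
        rw [hm] at h0
        have h2 : (d i : ℤ) * (m * (d j : ℤ)) = (d i : ℤ) * C i j := by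
          rw [← mul_assoc]; exact h0
        exact (mul_left_cancel₀ hdi0 h2).symm
      show C j i / (d i : ℤ) = C i j / (d j : ℤ)
      rw [hm, hij, Int.mul_ediv_cancel_left _ hdi0, Int.mul_ediv_cancel _ hdj0]
    · rw [hqdiag, hinv]
      ext i j
      obtain ⟨m, hm⟩ := h i j
      have hdj0 : (d j : ℤ) ≠ 0 := by exact_mod_cast (hdpos j).ne'
      simp only [Matrix.map_apply, Matrix.mul_diagonal, Matrix.of_apply]
      rw [show C i j / (d j : ℤ) = m by rw [hm, Int.mul_ediv_cancel_left _ hdj0]]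
      have hcast2 : (((B.1 - B'.1) i j : ℤ) : ℚ) = ((d j : ℕ) : ℚ) * (m : ℚ) := by
        exact_mod_cast congrArg (Int.cast : ℤ → ℚ) hm
      rw [hcast2, mul_comm ((d j : ℕ) : ℚ), mul_assoc, mul_inv_cancel₀ (hd0 j), mul_one]

include hdpos in
lemma dvd_extend (hchain : ∀ i j : Fin n, i ≤ j → d i ∣ d j)
    (B B' : BDset n (Matrix.diagonal fun i => (d i : ℤ)))
    (h : ∀ i j, j ≤ i → (d j : ℤ) ∣ (B.1 - B'.1) i j) :
    ∀ i j, (d j : ℤ) ∣ (B.1 - B'.1) i j := by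
  set C := B.1 - B'.1 with hC
  have hCrel : ∀ i j, C j i * (d j : ℤ) = (d i : ℤ) * C i j := by
    have h1 := (mem_diag_iff d B.1).mp B.2
    have h2 := (mem_diag_iff d B'.1).mp B'.2
    intro i j
    simp only [hC, Matrix.sub_apply, sub_mul, mul_sub, h1 i j, h2 i j]
  intro i j
  rcases le_or_gt j i with hji | hij
  · exact h i j hji
  · -- i < j, use relation
    obtain ⟨m, hm⟩ := h j i hij.le
    have hdi0 : (d i : ℤ) ≠ 0 := by exact_mod_cast (hdpos i).ne'
    have := hCrel i j
    rw [hm] at this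
    refine ⟨m, mul_left_cancel₀ hdi0 ?_⟩
    rw [← this]; ring
end diag


section count
variable (d : Fin n → ℕ) (hdpos : ∀ i, 0 < d i) (hchain : ∀ i j : Fin n, i ≤ j → d i ∣ d j)

include hdpos hchain in
lemma card_diag :
    Nat.card (Quot (BDrel n (Matrix.diagonal fun i => (d i : ℤ)))) =
      ∏ i : Fin n, d i ^ (n - (i : ℕ)) := by
  have hd0 : ∀ i, ((d i : ℤ)) ≠ 0 := fun i => by exact_mod_cast (hdpos i).ne'
  set Dd := Matrix.diagonal fun i : Fin n => (d i : ℤ) with hDd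
  -- target type
  set T := ∀ j : Fin n, {i : Fin n // j ≤ i} → ZMod (d j) with hT
  -- the invariant map
  let φ : BDset n Dd → T := fun B j i => ((B.1 i.1 j : ℤ) : ZMod (d j))
  have hφsound : ∀ B B' : BDset n Dd, BDrel n Dd B B' → φ B = φ B' := by
    intro B B' hrel
    have hdvd := (rel_diag_iff d hdpos B B').mp hrel
    funext j i
    have : ((d j : ℕ) : ℤ) ∣ B.1 i.1 j - B'.1 i.1 j := by
      have := hdvd i.1 j; rwa [Matrix.sub_apply] at this
    exact (ZMod.intCast_eq_intCast_iff _ _ _).mpr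
      (Int.ModEq.symm ((Int.modEq_iff_dvd).mpr (by simpa using this)))
  -- the induced map on the quotient
  let F : Quot (BDrel n Dd) → T := Quot.lift φ hφsound
  have hinj : Function.Injective F := by
    intro x y
    induction x using Quot.ind with
    | _ B =>
    induction y using Quot.ind with
    | _ B' =>
    intro hxy
    apply Quot.sound
    refine (rel_diag_iff d hdpos B B').mpr (dvd_extend d hdpos hchain B B' ?_)
    intro i j hji
    have := congrFun (congrFun hxy j) ⟨i, hji⟩
    have h2 : ((d j : ℕ) : ℤ) ∣ B'.1 i j - B.1 i j :=
      ((ZMod.intCast_eq_intCast_iff _ _ _).mp this).dvd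
    rw [Matrix.sub_apply]
    exact (dvd_sub_comm).mpr h2
  have hsurj : Function.Surjective F := by
    intro t
    -- construct the matrix
    classical
    set M : Matrix (Fin n) (Fin n) ℤ := Matrix.of fun i j =>
      if h : j ≤ i then ((t j ⟨i, h⟩).val : ℤ)
      else ((d j / d i : ℕ) : ℤ) * ((t i ⟨j, (le_of_not_ge h)⟩).val : ℤ) with hM
    have hmem : Mᵀ * Dd = Ddᵀ * M := by
      rw [hDd, mem_diag_iff d]
      intro a b
      rcases le_or_gt b a with hba | hab
      · rcases eq_or_lt_of_le hba with heq | hlt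
        · subst heq; ring
        · have h1 : M a b = ((t b ⟨a, hba⟩).val : ℤ) := by
            simp only [hM, Matrix.of_apply, dif_pos hba]
          have h2 : M b a = ((d a / d b : ℕ) : ℤ) * ((t b ⟨a, hba⟩).val : ℤ) := by
            simp only [hM, Matrix.of_apply, dif_neg (not_le.mpr hlt)]
          rw [h1, h2]
          have : ((d a / d b : ℕ) : ℤ) * ((d b : ℕ) : ℤ) = ((d a : ℕ) : ℤ) := by
            exact_mod_cast congrArg (Nat.cast : ℕ → ℤ) (Nat.div_mul_cancel (hchain b a hba))
          calc ((d a / d b : ℕ) : ℤ) * ((t b ⟨a, hba⟩).val : ℤ) * ((d b : ℕ) : ℤ)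
              = (((d a / d b : ℕ) : ℤ) * ((d b : ℕ) : ℤ)) * ((t b ⟨a, hba⟩).val : ℤ) := by ring
            _ = ((d a : ℕ) : ℤ) * ((t b ⟨a, hba⟩).val : ℤ) := by rw [this]
      · have h1 : M a b = ((d b / d a : ℕ) : ℤ) * ((t a ⟨b, hab.le⟩).val : ℤ) := by
          simp only [hM, Matrix.of_apply, dif_neg (not_le.mpr hab)]
        have h2 : M b a = ((t a ⟨b, hab.le⟩).val : ℤ) := by
          simp only [hM, Matrix.of_apply, dif_pos hab.le]
        rw [h1, h2]
        have : ((d a : ℕ) : ℤ) * ((d b / d a : ℕ) : ℤ) = ((d b : ℕ) : ℤ) := by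
          exact_mod_cast congrArg (Nat.cast : ℕ → ℤ) (Nat.mul_div_cancel' (hchain a b hab.le))
        calc ((t a ⟨b, hab.le⟩).val : ℤ) * ((d b : ℕ) : ℤ)
            = (((d a : ℕ) : ℤ) * ((d b / d a : ℕ) : ℤ)) * ((t a ⟨b, hab.le⟩).val : ℤ) := by
              rw [this]; ring
          _ = ((d a : ℕ) : ℤ) * (((d b / d a : ℕ) : ℤ) * ((t a ⟨b, hab.le⟩).val : ℤ)) := by ring
    refine ⟨Quot.mk _ ⟨M, hmem⟩, ?_⟩
    show φ ⟨M, hmem⟩ = t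
    funext j i
    have : M i.1 j = ((t j ⟨i.1, i.2⟩).val : ℤ) := by
      simp only [hM, Matrix.of_apply, dif_pos i.2]
    show ((M i.1 j : ℤ) : ZMod (d j)) = t j i
    rw [this]
    haveI : NeZero (d j) := ⟨(hdpos j).ne'⟩
    push_cast [ZMod.natCast_val]
    simp [ZMod.cast_id]
  have hcard := Nat.card_eq_of_bijective F ⟨hinj, hsurj⟩
  rw [hcard, hT]
  rw [Nat.card_pi]
  apply Finset.prod_congr rfl
  intro j _
  rw [Nat.card_fun, Nat.card_zmod]
  congr 1
  rw [Nat.card_eq_fintype_card, Fintype.card_subtype]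
  have : Finset.filter (fun i => j ≤ i) Finset.univ = Finset.Ici j := by ext i; simp
  rw [this, Fin.card_Ici]
end count

end Aux

/-- if `D` has elementary divisors `d₁ | d₂ | … | d_n`, all dividing
`p^l`, then (1) the number of classes of `B(D)` mod `D` is invariant under
`D ↦ U·D·V` for `U, V ∈ GL_n(ℤ)`, and (2) it equals `d₁ⁿ·d₂^{n−1} ⋯ d_n`. -/
theorem bd_count_classes (n p l : ℕ) (hn : 1 ≤ n) (hp : p.Prime)
    (D : Matrix (Fin n) (Fin n) ℤ) (d : Fin n → ℕ)
    (hdpos : ∀ i, 0 < d i) (hchain : ∀ i j : Fin n, i ≤ j → d i ∣ d j)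
    (hdvd : ∀ i, d i ∣ p ^ l)
    (U₀ V₀ : (Matrix (Fin n) (Fin n) ℤ)ˣ)
    (hD : (U₀ : Matrix (Fin n) (Fin n) ℤ) * D * (V₀ : Matrix (Fin n) (Fin n) ℤ) =
      Matrix.diagonal fun i => (d i : ℤ)) :
    (∀ U V : (Matrix (Fin n) (Fin n) ℤ)ˣ,
      Nat.card (Quot (BDrel n D)) =
        Nat.card (Quot (BDrel n
          ((U : Matrix (Fin n) (Fin n) ℤ) * D * (V : Matrix (Fin n) (Fin n) ℤ))))) ∧
    Nat.card (Quot (BDrel n D)) = ∏ i : Fin n, d i ^ (n - (i : ℕ)) := by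
  constructor
  · intro U V
    exact transfer D U V
  · rw [transfer D U₀ V₀, hD]
    exact card_diag d hdpos hchain
end

section
/- Let p be a prime and let γ ∈ Sp_4(ℤ) with 2×2 integer blocks A, B, C, D, so γ = ((A, B), (C, D)). Suppose there exists τ ∈ ℍ₂⁺ with A·τ + B = τ·(C·τ + D), and there exists a matrix h ∈ Mat_4(ℚ_p) of rank strictly greater than 2 with γ·h = h (γ viewed in Mat_4(ℚ_p) via the canonical map ℤ → ℚ_p). Then γ = 1₄. -/
open Matrix

/-!
If `γ` fixes a matrix of rank `> 2`, then `S = γ - 1` has rank `≤ 1` over `ℚ_p`. So its `2 × 2`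
minors vanish; being integers, they vanish over `ℝ` as well, and `S = u wᵀ` with `u, w` real. The fixed-point equation says
`S P = P (Cτ + D - 1)` with `P = (τ; 1)`. Because `Im τ` is invertible, no nonzero real vector
lies in the column space of `P` and no nonzero real covector annihilates `P`. So if `w ≠ 0`,
some column of `S P = u (wᵀ P)` is a nonzero multiple of `u` lying in the column space of `P`,
which forces `u = 0`.
-/

namespace Matrix

variable {K m n : Type*} [Field K]

theorem mul_eq_mul_of_rank_le_one [Fintype n] {A : Matrix m n K} (hA : A.rank ≤ 1)
    (i j : m) (k l : n) : A i k * A j l = A i l * A j k := by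
  by_contra hne
  have hdet : (A.submatrix ![i, j] ![k, l]).det ≠ 0 := by
    rw [det_fin_two]
    simpa [sub_eq_zero] using hne
  have := rank_submatrix_le A ![i, j] ![k, l]
  rw [rank_of_det_ne_zero hdet, Fintype.card_fin] at this
  omega

theorem exists_eq_vecMulVec_of_mul_eq_mul {A : Matrix m n K}
    (hA : ∀ i j k l, A i k * A j l = A i l * A j k) : ∃ u w, A = vecMulVec u w := by
  by_cases hzero : A = 0
  · exact ⟨0, 0, by simp [hzero]⟩
  obtain ⟨i₀, j₀, hc⟩ : ∃ i j, A i j ≠ 0 := by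
    by_contra! h
    exact hzero (ext h)
  refine ⟨fun i => A i j₀ / A i₀ j₀, fun j => A i₀ j, ext fun i j => ?_⟩
  rw [vecMulVec_apply, div_mul_eq_mul_div, eq_div_iff hc, hA i i₀ j₀ j]

theorem mul_eq_mul_of_rank_map_intCast_le_one [Fintype n] [CharZero K] {A : Matrix m n ℤ}
    (hA : (A.map (Int.cast : ℤ → K)).rank ≤ 1) (i j : m) (k l : n) :
    A i k * A j l = A i l * A j k :=
  Int.cast_injective (α := K) (by simpa using mul_eq_mul_of_rank_le_one hA i j k l)

theorem map_intCast_sub_one {R : Type*} [Fintype m] [DecidableEq m] [Ring R] (M : Matrix m m ℤ) :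
    (M - 1).map (Int.cast : ℤ → R) = M.map Int.cast - 1 := by
  simpa using map_sub (Int.castRingHom R).mapMatrix M 1

-- The ascription makes `*` the product of `Matrix`, not the one of the type synonym `CStarMatrix`.
theorem fromBlocks_mul_fromRows_eq_fromRows_mul {R : Type*} [Fintype n] [DecidableEq n] [Ring R]
    {A B C D τ : Matrix n n R} (h : A * τ + B = τ * (C * τ + D)) :
    fromBlocks A B C D * (fromRows τ 1 : Matrix (n ⊕ n) n R) = fromRows τ 1 * (C * τ + D) := by
  rw [fromBlocks_mul_fromRows, fromRows_mul, Matrix.mul_one, Matrix.mul_one, Matrix.one_mul, h]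

end Matrix

section SiegelPoint

variable {n : Type*} [Fintype n] [DecidableEq n] {τ : Matrix n n ℂ}

theorem eq_zero_of_ofReal_eq_mulVec_ofReal (hτ : (τ.map Complex.im).det ≠ 0) {x y : n → ℝ}
    (h : (fun i => (x i : ℂ)) = τ *ᵥ fun i => (y i : ℂ)) : y = 0 := by
  refine eq_zero_of_mulVec_eq_zero hτ (funext fun i => ?_)
  simpa [mulVec, dotProduct, Complex.im_sum] using (congrArg Complex.im (congrFun h i)).symm

theorem eq_zero_of_ofReal_eq_fromRows_mulVec (hτ : (τ.map Complex.im).det ≠ 0)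
    {u : n ⊕ n → ℝ} {m : n → ℂ} (h : (fun i => (u i : ℂ)) = fromRows τ 1 *ᵥ m) : u = 0 := by
  rw [fromRows_mulVec, one_mulVec] at h
  have hm : m = fun i => (u (Sum.inr i) : ℂ) := funext fun i => (congrFun h (Sum.inr i)).symm
  have hbot : ∀ i, u (Sum.inr i) = 0 := congrFun <|
    eq_zero_of_ofReal_eq_mulVec_ofReal hτ (x := u ∘ Sum.inl) (funext fun i => by
      simpa [hm] using congrFun h (Sum.inl i))
  have htop : ∀ i, u (Sum.inl i) = 0 := fun i => by
    simpa [hm, hbot, mulVec, dotProduct] using congrFun h (Sum.inl i)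
  funext i
  cases i with
  | inl i => exact htop i
  | inr i => exact hbot i

theorem eq_zero_of_ofReal_vecMul_fromRows_eq_zero (hτ : (τ.map Complex.im).det ≠ 0)
    {w : n ⊕ n → ℝ} (h : (fun i => (w i : ℂ)) ᵥ* fromRows τ 1 = 0) : w = 0 := by
  rw [vecMul_fromRows, vecMul_one, add_eq_zero_iff_eq_neg, ← mulVec_transpose] at h
  have hτt : (τᵀ.map Complex.im).det ≠ 0 := by rwa [transpose_map, det_transpose]
  have htop : ∀ i, w (Sum.inl i) = 0 := congrFun <|
    eq_zero_of_ofReal_eq_mulVec_ofReal hτt (x := -(w ∘ Sum.inr)) (funext fun i => by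
      simpa [Function.comp_def] using (congrFun h i).symm)
  have hbot : ∀ i, w (Sum.inr i) = 0 := fun i => by
    simpa [htop, mulVec, dotProduct] using congrFun h i
  funext i
  cases i with
  | inl i => exact htop i
  | inr i => exact hbot i

theorem eq_zero_or_eq_zero_of_vecMulVec_mul_fromRows (hτ : (τ.map Complex.im).det ≠ 0)
    {u w : n ⊕ n → ℝ} {N : Matrix n n ℂ}
    (h : vecMulVec (fun i => (u i : ℂ)) (fun i => (w i : ℂ)) * (fromRows τ 1 : Matrix (n ⊕ n) n ℂ)
      = fromRows τ 1 * N) :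
    u = 0 ∨ w = 0 := by
  rw [or_iff_not_imp_right]
  intro hw
  obtain ⟨k, hk⟩ : ∃ k, ((fun i => (w i : ℂ)) ᵥ* fromRows τ 1) k ≠ 0 := by
    by_contra! h0
    exact hw (eq_zero_of_ofReal_vecMul_fromRows_eq_zero hτ (funext h0))
  rw [vecMulVec_mul] at h
  refine eq_zero_of_ofReal_eq_fromRows_mulVec hτ
    (m := (((fun i => (w i : ℂ)) ᵥ* fromRows τ 1) k)⁻¹ • N *ᵥ Pi.single k 1) (funext fun i => ?_)
  rw [mulVec_smul, mulVec_mulVec, mulVec_single_one, Pi.smul_apply, col_apply,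
    ← congrFun₂ h i k, vecMulVec_apply, smul_eq_mul]
  field_simp

theorem eq_zero_of_map_intCast_mul_fromRows (hτ : (τ.map Complex.im).det ≠ 0)
    {S : Matrix (n ⊕ n) (n ⊕ n) ℤ} (hS : ∀ i j k l, S i k * S j l = S i l * S j k)
    {N : Matrix n n ℂ}
    (h : S.map (Int.cast : ℤ → ℂ) * (fromRows τ 1 : Matrix (n ⊕ n) n ℂ) = fromRows τ 1 * N) :
    S = 0 := by
  obtain ⟨u, w, huw⟩ := exists_eq_vecMulVec_of_mul_eq_mul (A := S.map (Int.cast : ℤ → ℝ))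
    fun i j k l => by simpa using congrArg (Int.cast : ℤ → ℝ) (hS i j k l)
  have huw_ℂ : S.map (Int.cast : ℤ → ℂ) = vecMulVec (fun i => (u i : ℂ)) (fun i => (w i : ℂ)) := by
    ext i j
    simpa [vecMulVec_apply] using congrArg Complex.ofReal (congrFun₂ huw i j)
  rw [huw_ℂ] at h
  have hS_real : S.map (Int.cast : ℤ → ℝ) = 0 := by
    rcases eq_zero_or_eq_zero_of_vecMulVec_mul_fromRows hτ h with rfl | rfl <;> simp [huw]
  ext i j
  simpa using congrFun₂ hS_real i j

end SiegelPoint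

theorem sp4_fixing_siegel_point_and_high_rank_is_one_general (p : ℕ) [Fact p.Prime]
    (A B C D : Matrix (Fin 2) (Fin 2) ℤ)
    (τ : Matrix (Fin 2) (Fin 2) ℂ)
    (hτpos : (Matrix.of fun i j => (τ i j).im : Matrix (Fin 2) (Fin 2) ℝ).PosDef)
    (hfix : A.map (Int.cast : ℤ → ℂ) * τ + B.map (Int.cast : ℤ → ℂ)
      = τ * (C.map (Int.cast : ℤ → ℂ) * τ + D.map (Int.cast : ℤ → ℂ)))
    (h : Matrix (Fin 2 ⊕ Fin 2) (Fin 2 ⊕ Fin 2) ℚ_[p])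
    (hrank : 2 < h.rank)
    (hfixh : (fromBlocks A B C D).map (Int.cast : ℤ → ℚ_[p]) * h = h) :
    fromBlocks A B C D = 1 := by
  set S := fromBlocks A B C D - 1
  have hSh : S.map (Int.cast : ℤ → ℚ_[p]) * h = 0 := by
    rw [map_intCast_sub_one, Matrix.sub_mul, hfixh, Matrix.one_mul, sub_self]
  have hS_rank : (S.map (Int.cast : ℤ → ℚ_[p])).rank ≤ 1 := by
    have := rank_add_rank_le_card_of_mul_eq_zero hSh
    simp only [Fintype.card_sum, Fintype.card_fin] at this
    omega
  have hSτ : S.map (Int.cast : ℤ → ℂ) * (fromRows τ 1 : Matrix (Fin 2 ⊕ Fin 2) (Fin 2) ℂ) =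
      fromRows τ 1 * (C.map (Int.cast : ℤ → ℂ) * τ + D.map (Int.cast : ℤ → ℂ) - 1) := by
    rw [map_intCast_sub_one, Matrix.sub_mul, fromBlocks_map,
      fromBlocks_mul_fromRows_eq_fromRows_mul hfix, Matrix.one_mul, Matrix.mul_sub, Matrix.mul_one]
  exact sub_eq_zero.1 <| eq_zero_of_map_intCast_mul_fromRows hτpos.det_pos.ne'
    (mul_eq_mul_of_rank_map_intCast_le_one hS_rank) hSτ

/-- if `γ = ((A,B),(C,D)) ∈ Sp₄(ℤ)` fixes a point `τ` of the Siegel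
upper half plane `ℍ₂⁺` (i.e. `Aτ + B = τ(Cτ + D)`) and fixes a matrix
`h ∈ Mat₄(ℚ_p)` of rank `> 2`, then `γ = 1`. -/
theorem sp4_fixing_siegel_point_and_high_rank_is_one (p : ℕ) [Fact p.Prime]
    (A B C D : Matrix (Fin 2) (Fin 2) ℤ)
    (hγ : (fromBlocks A B C D)ᵀ * SpJ ℤ 2 * fromBlocks A B C D = SpJ ℤ 2)
    (τ : Matrix (Fin 2) (Fin 2) ℂ) (hτsymm : τᵀ = τ)
    (hτpos : (Matrix.of fun i j => (τ i j).im : Matrix (Fin 2) (Fin 2) ℝ).PosDef)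
    (hfix : A.map (Int.cast : ℤ → ℂ) * τ + B.map (Int.cast : ℤ → ℂ)
      = τ * (C.map (Int.cast : ℤ → ℂ) * τ + D.map (Int.cast : ℤ → ℂ)))
    (h : Matrix (Fin 2 ⊕ Fin 2) (Fin 2 ⊕ Fin 2) ℚ_[p])
    (hrank : 2 < h.rank)
    (hfixh : (fromBlocks A B C D).map (Int.cast : ℤ → ℚ_[p]) * h = h) :
    fromBlocks A B C D = 1 :=
  sp4_fixing_siegel_point_and_high_rank_is_one_general p A B C D τ hτpos hfix h hrank hfixh
end

section
/- There do not exist γ₁, γ₂ ∈ Sp_4(ℤ) such that γ₂ has the block form ((A, B), (−B, A)) for some A, B ∈ Mat_2(ℤ) and, as matrices over ℚ, γ₁ · diag(1, 1, 1/4, 1/4) = (1/2)·Ω · γ₂. (This is the obstruction showing that the groupoid composition on Sp_4(ℤ)² \ (GSp_4^+(ℚ) × MSp_4(Ẑ) × ℍ₂⁺) is ill-defined at the point fixed by the element diag(1,1,1/2,1/2).) -/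
open Matrix

lemma SpJ_sq : (SpJ ℚ 2) * (SpJ ℚ 2) = -1 := by
  simp [SpJ, Matrix.fromBlocks_multiply, Matrix.fromBlocks_neg, ← Matrix.fromBlocks_one]

lemma SpJ_map : (SpJ ℤ 2).map (Int.cast : ℤ → ℚ) = SpJ ℚ 2 := by
  have : ((-1 : Matrix (Fin 2) (Fin 2) ℤ).map (Int.cast : ℤ → ℚ)) = -1 := by
    ext i j; simp [Matrix.map_apply, Matrix.one_apply, apply_ite]
  simp [SpJ, Matrix.fromBlocks_map, this]

lemma SpJ_det : (SpJ ℤ 2).det = 1 := by decide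

/-- there are no `γ₁, γ₂ ∈ Sp₄(ℤ)` with `γ₂` of the block form
`((A, B), (−B, A))` and `γ₁·diag(1,1,1/4,1/4) = (1/2)·Ω·γ₂` over `ℚ`. -/
theorem sp4_groupoid_obstruction :
    ¬ ∃ (γ₁ γ₂ : Matrix (Fin 2 ⊕ Fin 2) (Fin 2 ⊕ Fin 2) ℤ)
        (A B : Matrix (Fin 2) (Fin 2) ℤ),
      γ₁ᵀ * SpJ ℤ 2 * γ₁ = SpJ ℤ 2 ∧
      γ₂ᵀ * SpJ ℤ 2 * γ₂ = SpJ ℤ 2 ∧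
      γ₂ = fromBlocks A B (-B) A ∧
      γ₁.map (Int.cast : ℤ → ℚ) *
          diagonal (Sum.elim ![1, 1] ![(1 : ℚ) / 4, (1 : ℚ) / 4]) =
        ((1 : ℚ) / 2) • (SpJ ℚ 2 * γ₂.map (Int.cast : ℤ → ℚ)) := by
  rintro ⟨γ₁, γ₂, A, B, h1, h2, hform, hQ⟩
  set c : ℤ → ℚ := (Int.cast : ℤ → ℚ) with hc
  set D : Matrix (Fin 2 ⊕ Fin 2) (Fin 2 ⊕ Fin 2) ℚ :=
    diagonal (Sum.elim ![1, 1] ![(1 : ℚ) / 4, (1 : ℚ) / 4]) with hD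
  have hmul : (SpJ ℤ 2 * γ₁).map c = SpJ ℚ 2 * γ₁.map c := by
    simpa [SpJ_map, hc] using
      Matrix.map_mul (L := SpJ ℤ 2) (M := γ₁) (f := Int.castRingHom ℚ)
  -- rearrange the rational equation
  have hEq : γ₂.map c = (-2 : ℚ) • ((SpJ ℤ 2 * γ₁).map c * D) := by
    rw [hmul, Matrix.mul_assoc, hQ, Matrix.mul_smul, ← Matrix.mul_assoc, SpJ_sq, smul_smul]
    norm_num
  -- all entries in the left-hand columns of γ₂ are even
  have key : ∀ p (j : Fin 2), 2 ∣ γ₂ p (Sum.inl j) := by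
    intro p j
    have hd : (Sum.elim ![1, 1] ![(1 : ℚ) / 4, (1 : ℚ) / 4]) (Sum.inl j) = 1 := by
      fin_cases j <;> rfl
    have h := congrFun (congrFun hEq p) (Sum.inl j)
    rw [Matrix.smul_apply, Matrix.mul_diagonal, hd, mul_one, Matrix.map_apply,
      Matrix.map_apply, smul_eq_mul] at h
    have h'' : (γ₂ p (Sum.inl j) : ℚ) = ((-2 * (SpJ ℤ 2 * γ₁) p (Sum.inl j) : ℤ) : ℚ) := by
      push_cast
      exact h
    have h' : γ₂ p (Sum.inl j) = -2 * (SpJ ℤ 2 * γ₁) p (Sum.inl j) :=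
      Int.cast_injective h''
    exact ⟨-((SpJ ℤ 2 * γ₁) p (Sum.inl j)), by rw [h']; ring⟩
  -- hence all entries of γ₂ are even
  have hdvd : ∀ p q, 2 ∣ γ₂ p q := by
    have hA : ∀ i j, 2 ∣ A i j := by
      intro i j
      have := key (Sum.inl i) j
      rwa [hform, Matrix.fromBlocks_apply₁₁] at this
    have hB : ∀ i j, 2 ∣ B i j := by
      intro i j
      have := key (Sum.inr i) j
      rw [hform, Matrix.fromBlocks_apply₂₁] at this
      simpa using this.neg_right
    rintro (i | i) (j | j) <;>
      simp only [hform, Matrix.fromBlocks_apply₁₁, Matrix.fromBlocks_apply₁₂,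
        Matrix.fromBlocks_apply₂₁, Matrix.fromBlocks_apply₂₂, Matrix.neg_apply]
    · exact hA i j
    · exact hB i j
    · exact (hB i j).neg_right
    · exact hA i j
  -- so 2 divides det γ₂
  have hdet2 : 2 ∣ γ₂.det := by
    rw [Matrix.det_apply]
    refine Finset.dvd_sum fun σ _ => ?_
    rw [Units.smul_def]
    refine Dvd.dvd.mul_left ?_ _
    exact dvd_trans (hdvd (σ (Sum.inl 0)) (Sum.inl 0))
      (Finset.dvd_prod_of_mem _ (Finset.mem_univ (Sum.inl 0)))
  -- but det γ₂ = ±1 since γ₂ is symplectic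
  have hdet1 : γ₂.det * γ₂.det = 1 := by
    have := congrArg Matrix.det h2
    rwa [Matrix.det_mul, Matrix.det_mul, Matrix.det_transpose, SpJ_det, mul_one,
      mul_comm] at this
  rcases mul_self_eq_one_iff.mp hdet1 with h | h <;> rw [h] at hdet2 <;> omega
end

section
/- Let B be a nonempty finite set of primes and let χ : ∏_{p∈B} ℤ_p^× → 𝕋 be a continuous group homomorphism which is nontrivial (χ(a) ≠ 1 for some a). For each p ∈ B, let χ_p : ℤ_p^× → 𝕋 be the p-th component character χ_p(u) = χ(1, …, u, …, 1), and let k_p ∈ ℕ be such that χ_p(u) = 1 whenever u ≡ 1 (mod p^{k_p}). Set m = ∏_{p∈B} p^{k_p}. Then the function χ_m : ℤ → ℂ defined by χ_m(n) = χ((n, n, …, n)) if gcd(n, m) = 1 and χ_m(n) = 0 otherwise is a Dirichlet character modulo m (i.e. it is completely multiplicative, periodic with period m, and vanishes exactly on integers not coprime to m), and it is nontrivial: there exists n₀ ∈ ℤ with gcd(n₀, m) = 1 and χ_m(n₀) ≠ 1. -/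
/-!
Reduction modulo `p ^ k p` in each factor, followed by the Chinese remainder theorem, gives a
surjective homomorphism `Φ : ∏ ℤ_pˣ → (ZMod m)ˣ` whose kernel is `∏ (1 + p ^ k p ℤ_p)`. The
character `χ` is trivial on that kernel, so it factors as `F ∘ Φ`, and the Dirichlet character is
`F` extended by zero. Since `(n, …, n) ↦ n mod m`, it takes the value `χ (n, …, n)` at `n`, and it
is nontrivial because `Φ` is onto.
-/

instance (p : Nat.Primes) : Fact (Nat.Prime (p : ℕ)) := ⟨p.2⟩

theorem IsLocalRing.surjective_units_map_of_surjective {R S : Type*} [CommRing R] [IsLocalRing R]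
    [CommRing S] (f : R →+* S) (hf : Function.Surjective f) :
    Function.Surjective (Units.map (f : R →* S)) := by
  cases subsingleton_or_nontrivial S
  · exact fun _ ↦ ⟨1, Subsingleton.elim _ _⟩
  · exact surjective_units_map_of_local_ringHom f hf (.of_surjective f hf)

namespace PadicInt

variable {p : ℕ} [Fact p.Prime]

theorem surjective_units_map_toZModPow (n : ℕ) :
    Function.Surjective (Units.map (toZModPow (p := p) n : ℤ_[p] →* ZMod (p ^ n))) :=
  IsLocalRing.surjective_units_map_of_surjective _ (ZMod.ringHom_surjective _)

theorem units_map_toZModPow_eq_one_iff {n : ℕ} {u : ℤ_[p]ˣ} :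
    Units.map (toZModPow (p := p) n : ℤ_[p] →* ZMod (p ^ n)) u = 1 ↔
      ∃ v : ℤ_[p], (u : ℤ_[p]) - 1 = (p : ℤ_[p]) ^ n * v := by
  rw [Units.ext_iff, Units.coe_map, MonoidHom.coe_coe, Units.val_one, ← sub_eq_zero,
    ← map_one (toZModPow n), ← map_sub, ← RingHom.mem_ker, ker_toZModPow,
    Ideal.mem_span_singleton]
  rfl

end PadicInt

namespace ZMod

open Function

variable {ι : Type*} [Fintype ι] {R : ι → Type*} [∀ i, CommRing (R i)] {a : ι → ℕ}

noncomputable def unitsPiToUnits (ha : Pairwise (Nat.Coprime on a))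
    (f : ∀ i, R i →+* ZMod (a i)) : (∀ i, (R i)ˣ) →* (ZMod (∏ i, a i))ˣ :=
  (Units.map ((prodEquivPi a ha).symm.toRingHom.comp (RingHom.pi fun i ↦
    (f i).comp (Pi.evalRingHom R i)) : (∀ i, R i) →* ZMod (∏ i, a i))).comp
    MulEquiv.piUnits.symm.toMonoidHom

variable (ha : Pairwise (Nat.Coprime on a)) (f : ∀ i, R i →+* ZMod (a i))

theorem prodEquivPi_unitsPiToUnits (u : ∀ i, (R i)ˣ) (i : ι) :
    prodEquivPi a ha (unitsPiToUnits ha f u) i = f i (u i) := by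
  simp [unitsPiToUnits, -prodEquivPi_apply]

theorem unitsPiToUnits_eq_one_iff {u : ∀ i, (R i)ˣ} :
    unitsPiToUnits ha f u = 1 ↔ ∀ i, Units.map (f i : R i →* ZMod (a i)) (u i) = 1 := by
  simp only [Units.ext_iff, ← (prodEquivPi a ha).injective.eq_iff, funext_iff,
    prodEquivPi_unitsPiToUnits, Units.val_one, map_one, Pi.one_apply, Units.coe_map,
    MonoidHom.coe_coe]

theorem unitsPiToUnits_apply_of_eq_intCast {u : ∀ i, (R i)ˣ} {n : ℤ}
    (hu : ∀ i, (u i : R i) = n) :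
    (unitsPiToUnits ha f u : ZMod (∏ i, a i)) = n := by
  refine (prodEquivPi a ha).injective (funext fun i ↦ ?_)
  rw [prodEquivPi_unitsPiToUnits, hu, map_intCast, map_intCast, Pi.intCast_apply]

theorem unitsPiToUnits_surjective
    (hf : ∀ i, Surjective (Units.map (f i : R i →* ZMod (a i)))) :
    Surjective (unitsPiToUnits ha f) := by
  intro x
  choose u hu using fun i ↦
    hf i (MulEquiv.piUnits (Units.map (prodEquivPi a ha : ZMod (∏ i, a i) →* ∀ i, ZMod (a i)) x) i)
  refine ⟨u, Units.ext ((prodEquivPi a ha).injective (funext fun i ↦ ?_))⟩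
  rw [prodEquivPi_unitsPiToUnits]
  simpa [Units.ext_iff] using hu i

end ZMod

theorem character_product_padic_units_gives_dirichlet_character_general
    (B : Finset Nat.Primes)
    (χ : (∀ p : {q : Nat.Primes // q ∈ B}, ℤ_[(p.1 : ℕ)]ˣ) →* Circle)
    (hχnt : ∃ a : ∀ p : {q : Nat.Primes // q ∈ B}, ℤ_[(p.1 : ℕ)]ˣ, χ a ≠ 1)
    (k : {q : Nat.Primes // q ∈ B} → ℕ)
    (hk : ∀ (p : {q : Nat.Primes // q ∈ B}) (u : ℤ_[(p.1 : ℕ)]ˣ),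
      (∃ v : ℤ_[(p.1 : ℕ)], (u : ℤ_[(p.1 : ℕ)]) - 1 = ((p.1 : ℕ) : ℤ_[(p.1 : ℕ)]) ^ (k p) * v) →
      χ (Pi.mulSingle p u) = 1)
    (m : ℕ) (hm : m = ∏ p ∈ B.attach, (p.1 : ℕ) ^ (k p)) :
    ∃ ψ : DirichletCharacter ℂ m,
      (∀ (n : ℤ) (u : ∀ p : {q : Nat.Primes // q ∈ B}, ℤ_[(p.1 : ℕ)]ˣ),
        IsCoprime n (m : ℤ) →
        (∀ p : {q : Nat.Primes // q ∈ B}, ((u p : ℤ_[(p.1 : ℕ)])) = (n : ℤ_[(p.1 : ℕ)])) →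
        ψ (n : ZMod m) = (χ u : ℂ)) ∧
      (∀ n : ℤ, ¬ IsCoprime n (m : ℤ) → ψ (n : ZMod m) = 0) ∧
      (∃ n₀ : ℤ, IsCoprime n₀ (m : ℤ) ∧ ψ (n₀ : ZMod m) ≠ 1) := by
  have hcop : Pairwise (Function.onFun Nat.Coprime fun p : {q // q ∈ B} ↦ (p.1 : ℕ) ^ k p) :=
    fun p q hpq ↦ Nat.Coprime.pow _ _
      ((Nat.coprime_primes p.1.2 q.1.2).2 fun h ↦ hpq (Subtype.ext (Subtype.ext h)))
  obtain rfl : m = ∏ p, (p.1 : ℕ) ^ k p := hm.trans (by rw [Finset.univ_eq_attach])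
  set Φ := ZMod.unitsPiToUnits hcop fun p ↦ PadicInt.toZModPow (k p)
  have hker : Φ.ker ≤ χ.ker := fun u hu ↦ Subgroup.pi_mem_of_mulSingle_mem u fun p ↦
    hk p (u p) (PadicInt.units_map_toZModPow_eq_one_iff.1
      ((ZMod.unitsPiToUnits_eq_one_iff hcop _).1 hu p))
  let F := Φ.liftOfSurjective (ZMod.unitsPiToUnits_surjective hcop _ fun p ↦
    PadicInt.surjective_units_map_toZModPow (k p)) ⟨χ, hker⟩
  let ψ : DirichletCharacter ℂ _ := MulChar.ofUnitHom (Circle.toUnits.comp F)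
  have hψ (u) : ψ (Φ u) = χ u := by
    rw [MulChar.ofUnitHom_coe, MonoidHom.comp_apply, MonoidHom.liftOfRightInverse_comp_apply]
    rfl
  refine ⟨ψ, fun n u _ hu ↦ ?_, fun n hn ↦ ψ.map_nonunit ?_, ?_⟩
  · rw [← ZMod.unitsPiToUnits_apply_of_eq_intCast hcop _ hu, hψ]
  · rwa [ZMod.coe_int_isUnit_iff_isCoprime, isCoprime_comm]
  · obtain ⟨a, ha⟩ := hχnt
    obtain ⟨n₀, hn₀⟩ := ZMod.intCast_surjective (Φ a).val
    refine ⟨n₀, ?_, ?_⟩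
    · rw [isCoprime_comm, ← ZMod.coe_int_isUnit_iff_isCoprime, hn₀]
      exact (Φ a).isUnit
    · rw [hn₀, hψ]
      exact fun h ↦ ha (Circle.coe_eq_one.1 h)

/-- a nontrivial continuous character `χ` of `∏_{p∈B} ℤ_p^×` which is,
componentwise, trivial on `1 + p^{k_p}·ℤ_p`, induces a nontrivial Dirichlet character
`χ_m` modulo `m = ∏_{p∈B} p^{k_p}`, via `χ_m(n) = χ(n, …, n)` for `gcd(n,m) = 1` and
`χ_m(n) = 0` otherwise. -/
theorem character_product_padic_units_gives_dirichlet_character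
    (B : Finset Nat.Primes) (hB : B.Nonempty)
    (χ : (∀ p : {q : Nat.Primes // q ∈ B}, ℤ_[(p.1 : ℕ)]ˣ) →* Circle)
    (hχcont : Continuous χ)
    (hχnt : ∃ a : ∀ p : {q : Nat.Primes // q ∈ B}, ℤ_[(p.1 : ℕ)]ˣ, χ a ≠ 1)
    (k : {q : Nat.Primes // q ∈ B} → ℕ)
    (hk : ∀ (p : {q : Nat.Primes // q ∈ B}) (u : ℤ_[(p.1 : ℕ)]ˣ),
      (∃ v : ℤ_[(p.1 : ℕ)], (u : ℤ_[(p.1 : ℕ)]) - 1 = ((p.1 : ℕ) : ℤ_[(p.1 : ℕ)]) ^ (k p) * v) →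
      χ (Pi.mulSingle p u) = 1)
    (m : ℕ) (hm : m = ∏ p ∈ B.attach, (p.1 : ℕ) ^ (k p)) :
    ∃ ψ : DirichletCharacter ℂ m,
      (∀ (n : ℤ) (u : ∀ p : {q : Nat.Primes // q ∈ B}, ℤ_[(p.1 : ℕ)]ˣ),
        IsCoprime n (m : ℤ) →
        (∀ p : {q : Nat.Primes // q ∈ B}, ((u p : ℤ_[(p.1 : ℕ)])) = (n : ℤ_[(p.1 : ℕ)])) →
        ψ (n : ZMod m) = (χ u : ℂ)) ∧
      (∀ n : ℤ, ¬ IsCoprime n (m : ℤ) → ψ (n : ZMod m) = 0) ∧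
      (∃ n₀ : ℤ, IsCoprime n₀ (m : ℤ) ∧ ψ (n₀ : ZMod m) ≠ 1) :=
  character_product_padic_units_gives_dirichlet_character_general B χ hχnt k hk m hm
end
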